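/- arXiv:1507.00807 — 2 statements merged into one kernel-verified Lean document; each statement's English description precedes it below -/
import Mathlib

section
/- Let a < b be real numbers, let n be a natural number ≥ 1 and λ a real number, and set f(x) = λ sin((2n−1)π(x−a)/(2(b−a))). Let w : [a,b] → [0,∞) be a concave increasing function that is linear (affine) on each of the subintervals I_k = [a + 2(k−1)(b−a)/(2n−1), a + 2k(b−a)/(2n−1)], k = 1, …, n−1, and constant on the subinterval I = [a + 2(n−1)(b−a)/(2n−1), b]. Then (∫ₐᵇ w(x) f'(x)² dx)² = (∫ₐᵇ w(x) f(x)² dx) · (∫ₐᵇ w(x) f''(x)² dx). -/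
open intervalIntegral Real MeasureTheory

/-!
Write `f x = λ sin (c (x - a))` with `c = (2n-1)π / (2(b-a))`. Then `f' = λc cos` and `f'' = -λc² sin`,
so the identity reduces to `∫ w cos² = ∫ w sin²`, i.e. to `∫ w(x) cos(2c(x - a)) dx = 0`.
The interval `[a, b]` splits into the `n - 1` intervals `I_k`, each a full period of
`cos (2c(x - a))`, followed by the half period `I`. Over a full period the integral of an affine
function times this cosine vanishes, and over the final half period (starting at a zero of the sine)
so does the integral of a constant.
-/

theorem integral_mul_cos_eq_zero_of_eqOn_affine {w : ℝ → ℝ} {ω : ℝ} (hω : ω ≠ 0)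
    {a p q α β : ℝ} (hw : Set.EqOn w (fun x => α * x + β) (Set.uIcc p q))
    (hp : sin (ω * (p - a)) = 0) (hq : sin (ω * (q - a)) = 0)
    (hcos : α * cos (ω * (p - a)) = α * cos (ω * (q - a))) :
    ∫ x in p..q, w x * cos (ω * (x - a)) = 0 := by
  let F : ℝ → ℝ := fun x =>
    (α * x + β) * sin (ω * (x - a)) / ω + α * cos (ω * (x - a)) / ω ^ 2
  have hF : ∀ x, HasDerivAt F ((α * x + β) * cos (ω * (x - a))) x := by
    intro x
    have hphase : HasDerivAt (fun x : ℝ => ω * (x - a)) ω x := by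
      simpa using ((hasDerivAt_id x).sub_const a).const_mul ω
    have hline : HasDerivAt (fun x : ℝ => α * x + β) α x := by
      simpa using ((hasDerivAt_id x).const_mul α).add_const β
    refine (((hline.mul hphase.sin).div_const ω).add
      ((hphase.cos.const_mul α).div_const (ω ^ 2))).congr_deriv ?_
    field_simp
    ring
  have hcont : Continuous fun x => (α * x + β) * cos (ω * (x - a)) := by fun_prop
  rw [integral_congr (g := fun x => (α * x + β) * cos (ω * (x - a))) fun x hx => by
      simp only [hw hx],
    integral_eq_sub_of_hasDerivAt (fun x _ => hF x) (hcont.intervalIntegrable p q)]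
  simp only [F, hp, hq, hcos]
  ring

-- `I_k = [partitionPoint a b n (k - 1), partitionPoint a b n k]` and
-- `I = [partitionPoint a b n (n - 1), b]`.
noncomputable def partitionPoint (a b : ℝ) (n k : ℕ) : ℝ := a + 2 * k * (b - a) / (2 * n - 1)

section partitionPoint

variable {a b : ℝ} {n : ℕ}

theorem partitionPoint_le (hab : a ≤ b) {k : ℕ} (hk : k < n) : partitionPoint a b n k ≤ b := by
  have hk' : (k : ℝ) + 1 ≤ n := by exact_mod_cast hk
  have : 2 * k * (b - a) / (2 * n - 1) ≤ b - a := by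
    rw [div_le_iff₀ (by linarith)]
    nlinarith
  unfold partitionPoint
  linarith

theorem le_partitionPoint_self (hab : a ≤ b) (hn : 1 ≤ n) : b ≤ partitionPoint a b n n := by
  have hn' : (1 : ℝ) ≤ n := by exact_mod_cast hn
  have : b - a ≤ 2 * n * (b - a) / (2 * n - 1) := by
    rw [le_div_iff₀ (by linarith)]
    nlinarith
  unfold partitionPoint
  linarith

theorem monotone_partitionPoint (hab : a ≤ b) (hn : 1 ≤ n) : Monotone (partitionPoint a b n) := by
  have hn' : (1 : ℝ) ≤ n := by exact_mod_cast hn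
  intro i j hij
  unfold partitionPoint
  have : 0 < 2 * (n : ℝ) - 1 := by linarith
  gcongr

theorem partitionPoint_zero : partitionPoint a b n 0 = a := by
  simp [partitionPoint]

theorem mul_partitionPoint_sub (hab : a ≠ b) (hn : 1 ≤ n) (k : ℕ) :
    (2 * n - 1) * π / (b - a) * (partitionPoint a b n k - a) = k * (2 * π) := by
  have hn' : (1 : ℝ) ≤ n := by exact_mod_cast hn
  have : 2 * (n : ℝ) - 1 ≠ 0 := by linarith
  have : b - a ≠ 0 := sub_ne_zero.2 hab.symm
  unfold partitionPoint
  field_simp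
  ring

end partitionPoint

theorem sin_mul_min_partitionPoint_sub_eq_zero {a b : ℝ} (hab : a ≠ b) {n : ℕ} (hn : 1 ≤ n)
    (k : ℕ) : sin ((2 * n - 1) * π / (b - a) * (min (partitionPoint a b n k) b - a)) = 0 := by
  rcases min_choice (partitionPoint a b n k) b with h | h <;> rw [h]
  · rw [mul_partitionPoint_sub hab hn, ← mul_assoc, ← Nat.cast_ofNat, ← Nat.cast_mul,
      sin_nat_mul_pi]
  · have : (2 * n - 1) * π / (b - a) * (b - a) = ((2 * n - 1 : ℤ) : ℝ) * π := by
      push_cast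
      field_simp [sub_ne_zero.2 hab.symm]
    rw [this, sin_int_mul_pi]

theorem integral_mul_cos_eq_zero_of_piecewise_affine {a b : ℝ} (hab : a < b) {n : ℕ}
    (hn : 1 ≤ n) {w : ℝ → ℝ} (hw : IntervalIntegrable w volume a b)
    (hwlin : ∀ k : ℕ, 1 ≤ k → k ≤ n - 1 → ∃ α β : ℝ,
      ∀ x ∈ Set.Icc (a + 2 * ((k : ℝ) - 1) * (b - a) / (2 * (n : ℝ) - 1))
                    (a + 2 * (k : ℝ) * (b - a) / (2 * (n : ℝ) - 1)),
        w x = α * x + β)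
    (hwconst : ∃ c : ℝ,
      ∀ x ∈ Set.Icc (a + 2 * ((n : ℝ) - 1) * (b - a) / (2 * (n : ℝ) - 1)) b,
        w x = c) :
    ∫ x in a..b, w x * cos ((2 * n - 1) * π / (b - a) * (x - a)) = 0 := by
  set ω : ℝ := (2 * n - 1) * π / (b - a) with hω
  have hω0 : ω ≠ 0 := by
    have : (1 : ℝ) ≤ n := by exact_mod_cast hn
    have : 0 < b - a := sub_pos.2 hab
    have : 0 < 2 * (n : ℝ) - 1 := by linarith
    positivity
  set pts : ℕ → ℝ := fun k => min (partitionPoint a b n k) b with hpts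
  have hpts_of_lt : ∀ k < n, pts k = partitionPoint a b n k :=
    fun k hk => min_eq_left (partitionPoint_le hab.le hk)
  have hpts_mono : Monotone pts :=
    fun i j hij => min_le_min_right _ (monotone_partitionPoint hab.le hn hij)
  have hpts_mem : ∀ k, pts k ∈ Set.uIcc a b := by
    intro k
    rw [Set.uIcc_of_le hab.le]
    refine ⟨le_min ?_ hab.le, min_le_right _ _⟩
    simpa only [partitionPoint_zero] using monotone_partitionPoint hab.le hn k.zero_le
  have hint : ∀ k < n, IntervalIntegrable (fun x => w x * cos (ω * (x - a))) volume
      (pts k) (pts (k + 1)) := fun k _ =>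
    (hw.mul_continuousOn (by fun_prop)).mono_set
      (Set.uIcc_subset_uIcc (hpts_mem k) (hpts_mem (k + 1)))
  have hsum := sum_integral_adjacent_intervals hint
  have hpts_n : pts n = b := min_eq_right (le_partitionPoint_self hab.le hn)
  rw [show pts 0 = a by simp [hpts, partitionPoint_zero, hab.le], hpts_n] at hsum
  rw [← hsum]
  refine Finset.sum_eq_zero fun k hk => ?_
  have hk : k < n := Finset.mem_range.1 hk
  have hsin := sin_mul_min_partitionPoint_sub_eq_zero hab.ne hn
  rcases (Nat.succ_le_of_lt hk).lt_or_eq with hk1 | hk1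
  · obtain ⟨α, β, hαβ⟩ := hwlin (k + 1) (by omega) (by omega)
    refine integral_mul_cos_eq_zero_of_eqOn_affine hω0 (fun x hx => hαβ x ?_)
      (hsin k) (hsin (k + 1)) ?_
    · rw [Set.uIcc_of_le (hpts_mono k.le_succ), hpts_of_lt k hk, hpts_of_lt (k + 1) hk1] at hx
      have hk' : ((k + 1 : ℕ) : ℝ) - 1 = k := by push_cast; ring
      rwa [hk']
    · rw [hpts_of_lt k hk, hpts_of_lt (k + 1) hk1, mul_partitionPoint_sub hab.ne hn,
        mul_partitionPoint_sub hab.ne hn, cos_nat_mul_two_pi, cos_nat_mul_two_pi]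
  · obtain ⟨c, hc⟩ := hwconst
    refine integral_mul_cos_eq_zero_of_eqOn_affine (α := 0) (β := c) hω0 (fun x hx => ?_)
      (hsin k) (hsin (k + 1)) (by simp)
    rw [Set.uIcc_of_le (hpts_mono k.le_succ), hpts_of_lt k hk, hk1, hpts_n] at hx
    have hk' : (k : ℝ) = n - 1 := by rw [← hk1]; push_cast; ring
    simp only [hc x (by rwa [← hk']), zero_mul, zero_add]

theorem integral_mul_cos_sq_eq_integral_mul_sin_sq {w : ℝ → ℝ} {a b c : ℝ}
    (hw : IntervalIntegrable w volume a b)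
    (h : ∫ x in a..b, w x * cos (2 * c * (x - a)) = 0) :
    ∫ x in a..b, w x * cos (c * (x - a)) ^ 2 = ∫ x in a..b, w x * sin (c * (x - a)) ^ 2 := by
  rw [← sub_eq_zero, ← integral_sub (hw.mul_continuousOn (by fun_prop))
    (hw.mul_continuousOn (by fun_prop)), ← h]
  congr 1
  ext x
  rw [mul_assoc, cos_two_mul']
  ring

theorem integral_mul_const_mul_sq (w g : ℝ → ℝ) (a b k : ℝ) :
    ∫ x in a..b, w x * (k * g x) ^ 2 = k ^ 2 * ∫ x in a..b, w x * g x ^ 2 := by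
  rw [← intervalIntegral.integral_const_mul]
  congr 1
  ext x
  ring

theorem sq_integral_mul_deriv_sq_eq_of_integral_mul_cos_eq_zero {w f : ℝ → ℝ} {a b c lam : ℝ}
    (hw : IntervalIntegrable w volume a b)
    (h : ∫ x in a..b, w x * cos (2 * c * (x - a)) = 0)
    (hf : ∀ x, f x = lam * sin (c * (x - a))) :
    (∫ x in a..b, w x * deriv f x ^ 2) ^ 2 =
      (∫ x in a..b, w x * f x ^ 2) * ∫ x in a..b, w x * deriv (deriv f) x ^ 2 := by
  have hphase : ∀ x, HasDerivAt (fun x => c * (x - a)) c x := fun x => by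
    simpa using ((hasDerivAt_id x).sub_const a).const_mul c
  have hf' : deriv f = fun x => (lam * c) * cos (c * (x - a)) := by
    rw [funext hf]
    funext x
    exact ((hphase x).sin.const_mul lam).deriv.trans (by ring)
  have hf'' : deriv (deriv f) = fun x => -(lam * c ^ 2) * sin (c * (x - a)) := by
    rw [hf']
    funext x
    exact ((hphase x).cos.const_mul (lam * c)).deriv.trans (by ring)
  rw [hf'', hf', funext hf]
  simp only [integral_mul_const_mul_sq w (fun x => cos (c * (x - a))),
    integral_mul_const_mul_sq w (fun x => sin (c * (x - a))),
    integral_mul_cos_sq_eq_integral_mul_sin_sq hw h]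
  ring

theorem equality_sufficiency_mixed_general
    (a b : ℝ) (hab : a < b) (n : ℕ) (hn : 1 ≤ n) (lam : ℝ)
    (w : ℝ → ℝ)
    (hwmono : MonotoneOn w (Set.Icc a b))
    (hwlin : ∀ k : ℕ, 1 ≤ k → k ≤ n - 1 → ∃ α β : ℝ,
      ∀ x ∈ Set.Icc (a + 2 * ((k : ℝ) - 1) * (b - a) / (2 * (n : ℝ) - 1))
                    (a + 2 * (k : ℝ) * (b - a) / (2 * (n : ℝ) - 1)),
        w x = α * x + β)
    (hwconst : ∃ c : ℝ,
      ∀ x ∈ Set.Icc (a + 2 * ((n : ℝ) - 1) * (b - a) / (2 * (n : ℝ) - 1)) b,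
        w x = c)
    (f : ℝ → ℝ)
    (hf : ∀ x, f x = lam * Real.sin ((2 * (n : ℝ) - 1) * Real.pi * (x - a) / (2 * (b - a)))) :
    (∫ x in a..b, w x * deriv f x ^ 2) ^ 2 =
      (∫ x in a..b, w x * f x ^ 2) * (∫ x in a..b, w x * deriv (deriv f) x ^ 2) := by
  have hw : IntervalIntegrable w volume a b := (Set.uIcc_of_le hab.le ▸ hwmono).intervalIntegrable
  have hcos := integral_mul_cos_eq_zero_of_piecewise_affine hab hn hw hwlin hwconst
  refine sq_integral_mul_deriv_sq_eq_of_integral_mul_cos_eq_zero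
    (c := (2 * n - 1) * π / (2 * (b - a))) (lam := lam) hw ?_ fun x => ?_
  · convert hcos using 5
    field_simp
  · rw [hf]
    congr 2
    field_simp

/-- Equality case of the corollary (sufficiency): if
`f x = λ sin ((2n-1)π(x-a)/(2(b-a)))` and the nonnegative concave increasing
weight `w` is affine on each subinterval
`I_k = [a + 2(k-1)(b-a)/(2n-1), a + 2k(b-a)/(2n-1)]`, `k = 1, …, n-1`, and
constant on `I = [a + 2(n-1)(b-a)/(2n-1), b]`, then equality holds. -/
theorem equality_sufficiency_mixed
    (a b : ℝ) (hab : a < b) (n : ℕ) (hn : 1 ≤ n) (lam : ℝ)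
    (w : ℝ → ℝ)
    (hw0 : ∀ x ∈ Set.Icc a b, 0 ≤ w x)
    (hwconc : ConcaveOn ℝ (Set.Icc a b) w)
    (hwmono : MonotoneOn w (Set.Icc a b))
    (hwlin : ∀ k : ℕ, 1 ≤ k → k ≤ n - 1 → ∃ α β : ℝ,
      ∀ x ∈ Set.Icc (a + 2 * ((k : ℝ) - 1) * (b - a) / (2 * (n : ℝ) - 1))
                    (a + 2 * (k : ℝ) * (b - a) / (2 * (n : ℝ) - 1)),
        w x = α * x + β)
    (hwconst : ∃ c : ℝ,
      ∀ x ∈ Set.Icc (a + 2 * ((n : ℝ) - 1) * (b - a) / (2 * (n : ℝ) - 1)) b,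
        w x = c)
    (f : ℝ → ℝ)
    (hf : ∀ x, f x = lam * Real.sin ((2 * (n : ℝ) - 1) * Real.pi * (x - a) / (2 * (b - a)))) :
    (∫ x in a..b, w x * deriv f x ^ 2) ^ 2 =
      (∫ x in a..b, w x * f x ^ 2) * (∫ x in a..b, w x * deriv (deriv f) x ^ 2) :=
  equality_sufficiency_mixed_general a b hab n hn lam w hwmono hwlin hwconst f hf
end

section
/- Let a < b be real numbers, let w : [a,b] → [0,∞) be a concave and (monotonically) decreasing function, and let f ∈ C²[a,b] satisfy f'(a) = 0 and f(b) = 0. Then (∫ₐᵇ w(x) f'(x)² dx)² ≤ (∫ₐᵇ w(x) f(x)² dx) · (∫ₐᵇ w(x) f''(x)² dx). -/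
/-!
Write `A = ∫ w f'²`, `B = ∫ w f²`, `C = ∫ w f''²` and `D = ∫ w f f''`. Weighted Cauchy–Schwarz
gives `D² ≤ B C`, so it suffices that `0 ≤ A ≤ -D`, i.e. `∫ w g'' ≤ 0` for `g = f²`.
Integrating by parts twice, `∫ w g'' = w'(a) g(a) + ∫ g dw'`, the other boundary terms vanishing
because `g(b) = g'(a) = g'(b) = 0`; both terms are `≤ 0` since `w` is decreasing and concave and
`g ≥ 0`. As `w` need not be differentiable, each integration by parts is replaced by the exact
identity `∫ W (u(· + h) - u) = ∫ (W(· - h) - W) u`, whose right side has a sign for every `h > 0`,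
followed by dominated convergence as `h → 0⁺`, all functions being extended off `[a, b]` by
`projIcc`.
-/

open Set MeasureTheory Filter Topology
open scoped NNReal Interval

variable {a b : ℝ}

theorem hasDerivAt_comp_projIcc (hab : a ≤ b) {g : ℝ → ℝ} {g' x : ℝ} (hx : x ∈ Ioo a b)
    (hg : HasDerivWithinAt g g' (Icc a b) x) :
    HasDerivAt (fun y => g (projIcc a b hab y)) g' x := by
  have hnhds : Icc a b ∈ 𝓝 x := Icc_mem_nhds hx.1 hx.2
  refine (hg.hasDerivAt hnhds).congr_of_eventuallyEq ?_
  filter_upwards [hnhds] with y hy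
  rw [projIcc_of_mem hab hy]

theorem ae_hasDerivAt_comp_projIcc (hab : a ≤ b) {g g' : ℝ → ℝ}
    (hg : ∀ x ∈ Ioo a b, HasDerivWithinAt g (g' x) (Icc a b) x) :
    ∀ᵐ x, HasDerivAt (fun y => g (projIcc a b hab y)) ((Ioo a b).indicator g' x) x := by
  filter_upwards [Measure.ae_ne volume a, Measure.ae_ne volume b] with x hxa hxb
  by_cases hx : x ∈ Ioo a b
  · rw [indicator_of_mem hx]
    exact hasDerivAt_comp_projIcc hab hx (hg x hx)
  rw [indicator_of_notMem hx]
  rcases (not_and_or.1 hx).imp (fun h => lt_of_le_of_ne (not_lt.1 h) hxa)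
    (fun h => lt_of_le_of_ne (not_lt.1 h) hxb.symm) with hlt | hgt
  · refine (hasDerivAt_const x (g a)).congr_of_eventuallyEq ?_
    filter_upwards [Iio_mem_nhds hlt] with y hy
    rw [projIcc_of_le_left hab (le_of_lt hy)]
  · refine (hasDerivAt_const x (g b)).congr_of_eventuallyEq ?_
    filter_upwards [Ioi_mem_nhds hgt] with y hy
    rw [projIcc_of_right_le hab (le_of_lt hy)]

theorem exists_lipschitzWith_comp_projIcc (hab : a ≤ b) {g g' : ℝ → ℝ}
    (hg : ∀ x ∈ Icc a b, HasDerivWithinAt g (g' x) (Icc a b) x)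
    (hg' : ContinuousOn g' (Icc a b)) :
    ∃ K, LipschitzWith K (fun y => g (projIcc a b hab y)) := by
  obtain ⟨C, hC⟩ := isCompact_Icc.exists_bound_of_continuousOn hg'
  have hlip : LipschitzOnWith C.toNNReal g (Icc a b) :=
    (convex_Icc a b).lipschitzOnWith_of_nnnorm_hasDerivWithin_le hg fun x hx => by
      rw [← NNReal.coe_le_coe, coe_nnnorm]
      exact (hC x hx).trans (le_max_left _ _)
  exact ⟨_, hlip.to_restrict.comp (LipschitzWith.projIcc hab)⟩

theorem tendsto_integral_mul_slope {W u v : ℝ → ℝ} {K : ℝ≥0}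
    (hW : IntervalIntegrable W volume a b) (hu : LipschitzWith K u)
    (hv : ∀ᵐ x, x ∈ Ι a b → HasDerivAt u (v x) x) :
    Tendsto (fun h => ∫ x in a..b, W x * (h⁻¹ * (u (x + h) - u x))) (𝓝[>] 0)
      (𝓝 (∫ x in a..b, W x * v x)) := by
  refine intervalIntegral.tendsto_integral_filter_of_dominated_convergence (fun x => K * ‖W x‖) ?_ ?_
    (hW.norm.const_mul _) ?_
  · filter_upwards with h
    exact hW.def'.aestronglyMeasurable.mul
      (continuous_const.mul ((hu.continuous.comp (continuous_add_const h)).sub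
        hu.continuous)).aestronglyMeasurable
  · filter_upwards [self_mem_nhdsWithin] with h (hh : 0 < h)
    filter_upwards with x _
    calc ‖W x * (h⁻¹ * (u (x + h) - u x))‖ = h⁻¹ * ‖u (x + h) - u x‖ * ‖W x‖ := by
          rw [norm_mul, norm_mul, norm_inv, Real.norm_of_nonneg hh.le]; ring
      _ ≤ h⁻¹ * (K * ‖x + h - x‖) * ‖W x‖ := by gcongr; exact hu.norm_sub_le _ _
      _ = K * ‖W x‖ := by
          rw [add_sub_cancel_left, Real.norm_of_nonneg hh.le]; field_simp
  · filter_upwards [hv] with x hx hxI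
    simpa using ((hx hxI).tendsto_slope_zero_right).const_mul (W x)

theorem integral_mul_deriv_nonpos_of_shift {W u v : ℝ → ℝ} {K : ℝ≥0}
    (hW : IntervalIntegrable W volume a b) (hu : LipschitzWith K u)
    (hv : ∀ᵐ x, x ∈ Ι a b → HasDerivAt u (v x) x)
    (hshift : ∀ᶠ h in 𝓝[>] 0, ∫ x in a..b, W x * (u (x + h) - u x) ≤ 0) :
    ∫ x in a..b, W x * v x ≤ 0 := by
  refine le_of_tendsto (tendsto_integral_mul_slope hW hu hv) ?_
  filter_upwards [hshift, self_mem_nhdsWithin] with h hshift (hh : 0 < h)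
  simp_rw [mul_left_comm (W _), intervalIntegral.integral_const_mul]
  exact mul_nonpos_of_nonneg_of_nonpos (inv_nonneg.2 hh.le) hshift

theorem integral_mul_comp_add_le {G g : ℝ → ℝ} (hab : a ≤ b) (hG : Monotone G)
    (hG0 : ∀ x, 0 ≤ G x) (hg : Continuous g) (hg0 : ∀ x, 0 ≤ g x)
    (hgb : ∀ x, b ≤ x → g x = 0) {h : ℝ} (hh : 0 ≤ h) :
    ∫ x in a..b, G x * g (x + h) ≤ ∫ x in a..b, G x * g x := by
  have hint : ∀ c d, IntervalIntegrable (fun x => G x * g x) volume c d := fun c d =>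
    hG.intervalIntegrable.mul_continuousOn hg.continuousOn
  have hGh : Monotone fun x => G (x + h) := fun x y hxy => hG (by linarith)
  calc ∫ x in a..b, G x * g (x + h) ≤ ∫ x in a..b, G (x + h) * g (x + h) := by
        refine intervalIntegral.integral_mono_on hab
          (hG.intervalIntegrable.mul_continuousOn (hg.comp (continuous_add_const h)).continuousOn)
          (hGh.intervalIntegrable.mul_continuousOn (hg.comp (continuous_add_const h)).continuousOn)
          fun x _ => mul_le_mul_of_nonneg_right (hG (by linarith)) (hg0 _)
    _ = ∫ x in a + h..b + h, G x * g x :=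
        intervalIntegral.integral_comp_add_right (fun x => G x * g x) h
    _ ≤ ∫ x in a..b + h, G x * g x :=
        intervalIntegral.integral_mono_interval (by linarith) (by linarith) le_rfl
          (ae_of_all _ fun x => mul_nonneg (hG0 x) (hg0 x)) (hint _ _)
    _ = ∫ x in a..b, G x * g x := by
        have htail : ∫ x in b..b + h, G x * g x = 0 := by
          refine (intervalIntegral.integral_congr fun x hx => ?_).trans
            intervalIntegral.integral_zero
          rw [uIcc_of_le (by linarith)] at hx
          simp [hgb x hx.1]
        rw [← intervalIntegral.integral_add_adjacent_intervals (hint a b) (hint b (b + h)), htail,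
          add_zero]

theorem integral_mul_deriv_nonpos_of_monotoneOn (hab : a ≤ b) {G g g' : ℝ → ℝ}
    (hG : MonotoneOn G (Icc a b)) (hG0 : ∀ x ∈ Icc a b, 0 ≤ G x)
    (hg : ∀ x ∈ Icc a b, HasDerivWithinAt g (g' x) (Icc a b) x)
    (hg' : ContinuousOn g' (Icc a b)) (hg0 : ∀ x ∈ Icc a b, 0 ≤ g x) (hgb : g b = 0) :
    ∫ x in a..b, G x * g' x ≤ 0 := by
  obtain ⟨K, hK⟩ := exists_lipschitzWith_comp_projIcc hab hg hg'
  have hĜ : Monotone fun x => G (projIcc a b hab x) := fun x y hxy =>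
    hG (projIcc a b hab x).2 (projIcc a b hab y).2 (monotone_projIcc hab hxy)
  have hv : ∀ᵐ x, x ∈ Ι a b → HasDerivAt (fun y => g (projIcc a b hab y)) (g' x) x := by
    filter_upwards [Measure.ae_ne volume b] with x hxb hx
    rw [uIoc_of_le hab] at hx
    have hx' : x ∈ Ioo a b := ⟨hx.1, lt_of_le_of_ne hx.2 hxb⟩
    exact hasDerivAt_comp_projIcc hab hx' (hg x (Ioo_subset_Icc_self hx'))
  have hshift : ∀ᶠ h in 𝓝[>] 0, ∫ x in a..b, G (projIcc a b hab x) *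
      (g (projIcc a b hab (x + h)) - g (projIcc a b hab x)) ≤ 0 := by
    filter_upwards [self_mem_nhdsWithin] with h (hh : 0 < h)
    have hĝ : Continuous fun x => g (projIcc a b hab x) := hK.continuous
    have hĝh : Continuous fun x => g (projIcc a b hab (x + h)) :=
      hĝ.comp (continuous_add_const h)
    simp_rw [mul_sub]
    rw [intervalIntegral.integral_sub (hĜ.intervalIntegrable.mul_continuousOn hĝh.continuousOn)
      (hĜ.intervalIntegrable.mul_continuousOn hĝ.continuousOn), sub_nonpos]
    refine integral_mul_comp_add_le hab hĜ (fun x => hG0 _ (projIcc a b hab x).2) hĝ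
      (fun x => hg0 _ (projIcc a b hab x).2) (fun x hx => ?_) hh.le
    rw [projIcc_of_right_le hab hx, hgb]
  calc ∫ x in a..b, G x * g' x = ∫ x in a..b, G (projIcc a b hab x) * g' x := by
        refine intervalIntegral.integral_congr fun x hx => ?_
        rw [uIcc_of_le hab] at hx
        simp only [projIcc_of_mem hab hx]
    _ ≤ 0 := integral_mul_deriv_nonpos_of_shift hĜ.intervalIntegrable hK hv hshift

theorem ConcaveOn.sub_le_sub_of_le {s : Set ℝ} {w : ℝ → ℝ} (hw : ConcaveOn ℝ s w) {x y h : ℝ}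
    (hxh : x - h ∈ s) (hy : y ∈ s) (hxy : x ≤ y) (hh : 0 ≤ h) :
    w (x - h) - w x ≤ w (y - h) - w y := by
  rcases (add_nonneg (sub_nonneg.2 hxy) hh).eq_or_lt with hL | hL
  · obtain rfl : x = y := by linarith
    rfl
  set μ := h / (y - x + h)
  set ν := (y - x) / (y - x + h)
  have hsum : ν + μ = 1 := by simp only [μ, ν]; field_simp
  -- `x` and `y - h` are the convex combinations of `x - h` and `y` with swapped weights
  have hx := hw.2 hxh hy (div_nonneg (sub_nonneg.2 hxy) hL.le) (div_nonneg hh hL.le) hsum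
  have hyh := hw.2 hxh hy (div_nonneg hh hL.le) (div_nonneg (sub_nonneg.2 hxy) hL.le)
    (by rw [add_comm, hsum])
  simp only [smul_eq_mul] at hx hyh
  rw [show ν * (x - h) + μ * y = x by simp only [μ, ν]; field_simp; ring] at hx
  rw [show μ * (x - h) + ν * y = y - h by simp only [μ, ν]; field_simp; ring] at hyh
  have hsplit : ∀ z, ν * z + μ * z = z := fun z => by rw [← add_mul, hsum, one_mul]
  linarith [hsplit (w (x - h)), hsplit (w y)]

theorem ConcaveOn.monotoneOn_comp_projIcc_sub (hab : a ≤ b) {w : ℝ → ℝ}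
    (hw : ConcaveOn ℝ (Icc a b) w) (hw' : AntitoneOn w (Icc a b)) {h : ℝ} (hh : 0 ≤ h) :
    MonotoneOn (fun x => w (projIcc a b hab (x - h)) - w (projIcc a b hab x)) (Icc a b) := by
  intro x hx y hy hxy
  have hproj : ∀ z ∈ Icc a b, (projIcc a b hab (z - h) : ℝ) = max a (z - h) := fun z hz => by
    rw [coe_projIcc, min_eq_right (by linarith [hz.2])]
  simp only [projIcc_of_mem hab hx, projIcc_of_mem hab hy, hproj x hx, hproj y hy]
  -- step back from `x` only as far as `[a, b]` allows, and by the same amount from `y`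
  set m := max a (x - h)
  have hm : m ∈ Icc a b := ⟨le_max_left _ _, max_le hab (by linarith [hx.2])⟩
  have hxm : x - h ≤ m := le_max_right _ _
  have hmx : m ≤ x := max_le hx.1 (by linarith)
  have hstep := hw.sub_le_sub_of_le (h := x - m) (by rwa [sub_sub_cancel]) hy hxy
    (by linarith)
  rw [sub_sub_cancel] at hstep
  refine hstep.trans (sub_le_sub_right (hw' ⟨le_max_left _ _, max_le hab (by linarith [hy.2])⟩
    ⟨by linarith [hm.1], by linarith [hy.2]⟩ (max_le (by linarith [hm.1]) (by linarith))) _)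

theorem intervalIntegral_eq_of_support_subset {F : ℝ → ℝ} {c d : ℝ}
    (hF : Function.support F ⊆ Ioc a b) (hca : c ≤ a) (hbd : b ≤ d) :
    ∫ x in c..d, F x = ∫ x in a..b, F x := by
  rw [intervalIntegral.integral_eq_integral_of_support_subset hF,
    intervalIntegral.integral_eq_integral_of_support_subset (hF.trans (Ioc_subset_Ioc hca hbd))]

theorem integral_mul_comp_add_sub_eq {W u : ℝ → ℝ} {c h : ℝ} (hW : Antitone W)
    (hu : Continuous u) (hsupp : Function.support u ⊆ Ioc a b) (hca : c ≤ a - h) (hh : 0 ≤ h) :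
    ∫ x in c..b, W x * (u (x + h) - u x) = ∫ x in a..b, (W (x - h) - W x) * u x := by
  have hWh : Antitone fun x => W (x - h) := fun x y hxy => hW (by linarith)
  have huh : Continuous fun x => u (x + h) := hu.comp (continuous_add_const h)
  have hsupp' : ∀ F : ℝ → ℝ, Function.support (fun x => F x * u x) ⊆ Ioc a b := fun F =>
    (Function.support_mul_subset_right _ _).trans hsupp
  have hshifted : ∫ x in c..b, W x * u (x + h) = ∫ x in a..b, W (x - h) * u x := by
    have hcomp := intervalIntegral.integral_comp_add_right (fun y => W (y - h) * u y) h
      (a := c) (b := b)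
    simp only [add_sub_cancel_right] at hcomp
    rw [hcomp, intervalIntegral_eq_of_support_subset (hsupp' _) (by linarith) (by linarith)]
  simp_rw [mul_sub, sub_mul]
  rw [intervalIntegral.integral_sub (hW.intervalIntegrable.mul_continuousOn huh.continuousOn)
      (hW.intervalIntegrable.mul_continuousOn hu.continuousOn),
    intervalIntegral.integral_sub (hWh.intervalIntegrable.mul_continuousOn hu.continuousOn)
      (hW.intervalIntegrable.mul_continuousOn hu.continuousOn),
    hshifted, intervalIntegral_eq_of_support_subset (hsupp' W) (by linarith) le_rfl]

theorem integral_mul_second_deriv_nonpos_of_concaveOn (hab : a ≤ b) {w g g' g'' : ℝ → ℝ}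
    (hw : ConcaveOn ℝ (Icc a b) w) (hw' : AntitoneOn w (Icc a b))
    (hg : ∀ x ∈ Icc a b, HasDerivWithinAt g (g' x) (Icc a b) x)
    (hg' : ∀ x ∈ Icc a b, HasDerivWithinAt g' (g'' x) (Icc a b) x)
    (hg'' : ContinuousOn g'' (Icc a b)) (hg0 : ∀ x ∈ Icc a b, 0 ≤ g x) (hgb : g b = 0)
    (hg'a : g' a = 0) (hg'b : g' b = 0) :
    ∫ x in a..b, w x * g'' x ≤ 0 := by
  set W : ℝ → ℝ := fun x => w (projIcc a b hab x)
  set u : ℝ → ℝ := fun x => g' (projIcc a b hab x)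
  obtain ⟨K, hK⟩ := exists_lipschitzWith_comp_projIcc hab hg' hg''
  have hW : Antitone W := fun x y hxy =>
    hw' (projIcc a b hab x).2 (projIcc a b hab y).2 (monotone_projIcc hab hxy)
  have hu : Function.support u ⊆ Ioo a b := fun x hx => by
    by_contra hx'
    rcases not_and_or.1 hx' with hxa | hxb
    · exact hx (by simp [u, projIcc_of_le_left hab (not_lt.1 hxa), hg'a])
    · exact hx (by simp [u, projIcc_of_right_le hab (not_lt.1 hxb), hg'b])
  have hv : ∀ᵐ x, x ∈ Ι (a - 1) b → HasDerivAt u ((Ioo a b).indicator g'' x) x :=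
    (ae_hasDerivAt_comp_projIcc hab fun x hx => hg' x (Ioo_subset_Icc_self hx)).mono
      fun _ hx _ => hx
  -- on `[a - 1, b]`, where `u` vanishes left of `a`, shifting leaves no boundary term at `a`
  have hshift : ∀ᶠ h in 𝓝[>] 0, ∫ x in a - 1..b, W x * (u (x + h) - u x) ≤ 0 := by
    filter_upwards [Ioc_mem_nhdsGT zero_lt_one] with h hh
    rw [integral_mul_comp_add_sub_eq hW hK.continuous (hu.trans Ioo_subset_Ioc_self)
      (by linarith [hh.2]) hh.1.le]
    calc ∫ x in a..b, (W (x - h) - W x) * u x = ∫ x in a..b, (W (x - h) - W x) * g' x := by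
          refine intervalIntegral.integral_congr fun x hx => ?_
          rw [uIcc_of_le hab] at hx
          simp only [u, projIcc_of_mem hab hx]
      _ ≤ 0 := integral_mul_deriv_nonpos_of_monotoneOn hab
          (hw.monotoneOn_comp_projIcc_sub hab hw' hh.1.le)
          (fun x _ => sub_nonneg.2 (hW (by linarith [hh.1])))
          hg (fun x hx => (hg' x hx).continuousWithinAt) hg0 hgb
  calc ∫ x in a..b, w x * g'' x = ∫ x in a..b, W x * (Ioo a b).indicator g'' x := by
        refine intervalIntegral.integral_congr_ae ?_
        filter_upwards [Measure.ae_ne volume b] with x hxb hx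
        rw [uIoc_of_le hab] at hx
        have hx' : x ∈ Ioo a b := ⟨hx.1, lt_of_le_of_ne hx.2 hxb⟩
        simp only [W, projIcc_of_mem hab (Ioo_subset_Icc_self hx'), indicator_of_mem hx']
    _ = ∫ x in a - 1..b, W x * (Ioo a b).indicator g'' x :=
        (intervalIntegral_eq_of_support_subset ((Function.support_mul_subset_right _ _).trans
          (support_indicator_subset.trans Ioo_subset_Ioc_self)) (by linarith) le_rfl).symm
    _ ≤ 0 := integral_mul_deriv_nonpos_of_shift hW.intervalIntegrable hK hv hshift

theorem sq_integral_mul_le_integral_mul_sq (hab : a ≤ b) {w f g : ℝ → ℝ}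
    (hw : ∀ x ∈ Icc a b, 0 ≤ w x)
    (hff : IntervalIntegrable (fun x => w x * f x ^ 2) volume a b)
    (hfg : IntervalIntegrable (fun x => w x * (f x * g x)) volume a b)
    (hgg : IntervalIntegrable (fun x => w x * g x ^ 2) volume a b) :
    (∫ x in a..b, w x * (f x * g x)) ^ 2 ≤
      (∫ x in a..b, w x * f x ^ 2) * ∫ x in a..b, w x * g x ^ 2 := by
  have hquad : ∀ t : ℝ, 0 ≤ (∫ x in a..b, w x * g x ^ 2) * (t * t) +
      2 * (∫ x in a..b, w x * (f x * g x)) * t + ∫ x in a..b, w x * f x ^ 2 := fun t => by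
    calc 0 ≤ ∫ x in a..b, w x * (f x + t * g x) ^ 2 :=
          intervalIntegral.integral_nonneg hab fun x hx => mul_nonneg (hw x hx) (sq_nonneg _)
      _ = ∫ x in a..b, (t * t * (w x * g x ^ 2) + 2 * t * (w x * (f x * g x)) +
            w x * f x ^ 2) :=
          intervalIntegral.integral_congr fun x _ => by ring
      _ = _ := by
          rw [intervalIntegral.integral_add ((hgg.const_mul _).add (hfg.const_mul _)) hff,
            intervalIntegral.integral_add (hgg.const_mul _) (hfg.const_mul _),
            intervalIntegral.integral_const_mul, intervalIntegral.integral_const_mul]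
          ring
  have hdiscrim := discrim_le_zero hquad
  rw [discrim] at hdiscrim
  linarith

/-- Analogue of the corollary for the boundary conditions `f' a = 0`,
`f b = 0`, with a concave and decreasing weight `w : [a,b] → [0,∞)`. -/
theorem hardy_littlewood_concave_decreasing_weight
    (a b : ℝ) (hab : a < b) (w f f' f'' : ℝ → ℝ)
    (hw0 : ∀ x ∈ Set.Icc a b, 0 ≤ w x)
    (hwconc : ConcaveOn ℝ (Set.Icc a b) w)
    (hwanti : AntitoneOn w (Set.Icc a b))
    (hf' : ∀ x ∈ Set.Icc a b, HasDerivWithinAt f (f' x) (Set.Icc a b) x)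
    (hf'' : ∀ x ∈ Set.Icc a b, HasDerivWithinAt f' (f'' x) (Set.Icc a b) x)
    (hf''cont : ContinuousOn f'' (Set.Icc a b))
    (hf'a : f' a = 0) (hfb : f b = 0) :
    (∫ x in a..b, w x * f' x ^ 2) ^ 2 ≤
      (∫ x in a..b, w x * f x ^ 2) * (∫ x in a..b, w x * f'' x ^ 2) := by
  have hfc : ContinuousOn f (Icc a b) := fun x hx => (hf' x hx).continuousWithinAt
  have hf'c : ContinuousOn f' (Icc a b) := fun x hx => (hf'' x hx).continuousWithinAt
  have hint : ∀ q : ℝ → ℝ, ContinuousOn q (Icc a b) →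
      IntervalIntegrable (fun x => w x * q x) volume a b := fun q hq => by
    rw [← uIcc_of_le hab.le] at hq hwanti
    exact hwanti.intervalIntegrable.mul_continuousOn hq
  have hkey : ∫ x in a..b, w x * (2 * (f' x ^ 2 + f x * f'' x)) ≤ 0 :=
    integral_mul_second_deriv_nonpos_of_concaveOn hab.le hwconc hwanti (g := fun x => f x ^ 2)
      (g' := fun x => 2 * (f x * f' x)) (fun x hx => ((hf' x hx).pow 2).congr_deriv (by ring))
      (fun x hx => (((hf' x hx).mul (hf'' x hx)).const_mul 2).congr_deriv (by ring))
      (by fun_prop) (fun x _ => sq_nonneg _) (by simp [hfb]) (by simp [hf'a]) (by simp [hfb])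
  have hsplit : ∫ x in a..b, w x * (2 * (f' x ^ 2 + f x * f'' x)) =
      2 * ((∫ x in a..b, w x * f' x ^ 2) + ∫ x in a..b, w x * (f x * f'' x)) := by
    rw [← intervalIntegral.integral_add (hint _ (by fun_prop)) (hint _ (by fun_prop)),
      ← intervalIntegral.integral_const_mul]
    exact intervalIntegral.integral_congr fun x _ => by ring
  have hA : 0 ≤ ∫ x in a..b, w x * f' x ^ 2 :=
    intervalIntegral.integral_nonneg hab.le fun x hx => mul_nonneg (hw0 x hx) (sq_nonneg _)
  calc (∫ x in a..b, w x * f' x ^ 2) ^ 2 ≤ (∫ x in a..b, w x * (f x * f'' x)) ^ 2 := by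
        nlinarith
    _ ≤ _ := sq_integral_mul_le_integral_mul_sq hab.le hw0 (hint _ (by fun_prop))
        (hint _ (by fun_prop)) (hint _ (by fun_prop))
end
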